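/- Let n ≥ 1, Π1 ≥ 0, Π2 > 0, Π3 > 0, Π4 > 0, and suppose Π3 = Π4 and Π1 = 2/Π4. Define K̂0(k) := D_k + √(D_k² + Π3²·(1 − Π1·D_k)) and L̂0(k) := D_k/Π4 + √(D_k²/Π4² − Π1·D_k + 1). Then the physical-space LQG gain matrices, defined entrywise for j, l ∈ {0,…,n−1} by (K₁)_{jl} := (1/n)·Σ_{k=0}^{n−1} K̂0(k)·exp(2πi·k·(j−l)/n), (K₂)_{jl} := (1/n)·Σ_{k=0}^{n−1} √(2·K̂0(k) + Π2·Π3²)·exp(2πi·k·(j−l)/n), (L₁)_{jl} := (1/n)·Σ_{k=0}^{n−1} √(2·L̂0(k)/Π4)·exp(2πi·k·(j−l)/n), (L₂)_{jl} := (1/n)·Σ_{k=0}^{n−1} L̂0(k)·exp(2πi·k·(j−l)/n), are all scalar multiples of the identity: K₁ = Π3·I, K₂ = √(2·Π3 + Π2·Π3²)·I, L₁ = √(2/Π4)·I, and L₂ = I. Hence the optimal LQG controller is completely decentralized. -/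

import Mathlib

open Matrix

/-- The `k`-th eigenvalue `−4·sin²(πk/n)` of the discrete periodic Laplacian. -/
noncomputable def Dlap (n k : ℕ) : ℝ := -4 * Real.sin (Real.pi * k / n) ^ 2

/-- The scalar Fourier-domain LQR gain at spatial frequency `k`. -/
noncomputable def Khat0 (n : ℕ) (Pi1 Pi3 : ℝ) (k : ℕ) : ℝ :=
  Dlap n k + Real.sqrt ((Dlap n k) ^ 2 + Pi3 ^ 2 * (1 - Pi1 * Dlap n k))

/-- The scalar Fourier-domain Kalman filter gain at spatial frequency `k`. -/
noncomputable def Lhat0 (n : ℕ) (Pi1 Pi4 : ℝ) (k : ℕ) : ℝ :=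
  Dlap n k / Pi4 + Real.sqrt ((Dlap n k) ^ 2 / Pi4 ^ 2 - Pi1 * Dlap n k + 1)

/-- The physical-space gain block `F⁻¹·diag(f(k))·F` recovered from a
frequency-domain gain `f` by the inverse discrete Fourier transform: its
`(j,l)` entry is `(1/n)·Σ_{k=0}^{n−1} f(k)·exp(2πi·k·(j−l)/n)`. -/
noncomputable def idftMatrix (n : ℕ) (f : ℕ → ℝ) : Matrix (Fin n) (Fin n) ℂ :=
  fun j l => (1 / (n : ℂ)) * ∑ k : Fin n, ((f (k : ℕ) : ℝ) : ℂ) *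
    Complex.exp (2 * (Real.pi : ℂ) * Complex.I * ((k : ℕ) : ℂ) *
      (((((j : ℕ) : ℤ) - ((l : ℕ) : ℤ)) : ℤ) : ℂ) / (n : ℂ))

/-! With `Π3 = Π4 = p` and `Π1 = 2/p` both discriminants become perfect squares,
`D_k² + p²(1 − 2D_k/p) = (p − D_k)²` and `D_k²/p² − 2D_k/p + 1 = (1 − D_k/p)²`, and since
`D_k ≤ 0` the square roots come off: `K̂0 ≡ p` and `L̂0 ≡ 1` do not depend on the frequency.
The inverse DFT of a constant symbol is that constant times the identity, because the
`n`-th roots of unity `exp(2πi·(j−l)/n)`, `j ≠ l`, have vanishing geometric sums. -/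

open Complex Finset
open scoped Real

theorem sum_range_exp_two_pi_I_mul_div_eq_zero {n : ℕ} {m : ℤ} (hm : ¬(n : ℤ) ∣ m) :
    ∑ k ∈ range n, exp (2 * π * I * (k : ℂ) * (m : ℂ) / n) = 0 := by
  rcases eq_or_ne n 0 with rfl | hn
  · simp
  have hζ := isPrimitiveRoot_exp n hn
  have hw : exp (2 * π * I / n) ^ m ≠ 1 := by
    rwa [Ne, hζ.zpow_eq_one_iff_dvd]
  have hwn : (exp (2 * π * I / n) ^ m) ^ n = 1 := by
    rw [← zpow_natCast, ← _root_.zpow_mul, hζ.zpow_eq_one_iff_dvd]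
    exact dvd_mul_left _ _
  have hterm (k : ℕ) : exp (2 * π * I * k * m / n) = (exp (2 * π * I / n) ^ m) ^ k := by
    rw [← exp_int_mul, ← exp_nat_mul]
    ring_nf
  simp only [hterm, geom_sum_eq hw, hwn, sub_self, zero_div]

theorem idftMatrix_const (n : ℕ) (c : ℝ) :
    idftMatrix n (fun _ => c) = (c : ℂ) • (1 : Matrix (Fin n) (Fin n) ℂ) := by
  ext j l
  have hn : (n : ℂ) ≠ 0 := Nat.cast_ne_zero.mpr j.pos.ne'
  simp only [idftMatrix, ← mul_sum, Matrix.smul_apply, Matrix.one_apply, smul_eq_mul]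
  split_ifs with hjl
  · subst hjl
    simp [field]
  · have hm : ¬(n : ℤ) ∣ (j : ℤ) - l := fun hdvd => hjl <| Fin.ext <| by
      have := Int.eq_zero_of_abs_lt_dvd hdvd (by rw [abs_lt]; omega)
      omega
    rw [Fin.sum_univ_eq_sum_range (fun k : ℕ => exp (2 * π * I * k * ((j - l : ℤ) : ℂ) / n)),
      sum_range_exp_two_pi_I_mul_div_eq_zero hm, mul_zero, mul_zero]

theorem Dlap_nonpos (n k : ℕ) : Dlap n k ≤ 0 :=
  mul_nonpos_of_nonpos_of_nonneg (by norm_num) (sq_nonneg _)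

theorem Khat0_two_div_self {p : ℝ} (hp : 0 < p) (n k : ℕ) : Khat0 n (2 / p) p k = p := by
  have hD := Dlap_nonpos n k
  have hsq : Dlap n k ^ 2 + p ^ 2 * (1 - 2 / p * Dlap n k) = (p - Dlap n k) ^ 2 := by
    field_simp
    ring
  rw [Khat0, hsq, Real.sqrt_sq (by linarith)]
  ring

theorem Lhat0_two_div_self {p : ℝ} (hp : 0 < p) (n k : ℕ) : Lhat0 n (2 / p) p k = 1 := by
  have hD : Dlap n k / p ≤ 0 := div_nonpos_of_nonpos_of_nonneg (Dlap_nonpos n k) hp.le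
  have hsq : Dlap n k ^ 2 / p ^ 2 - 2 / p * Dlap n k + 1 = (1 - Dlap n k / p) ^ 2 := by
    field_simp
    ring
  rw [Lhat0, hsq, Real.sqrt_sq (by linarith)]
  ring

theorem lqg_completely_decentralized_general (n : ℕ)
    (Pi1 Pi2 Pi3 Pi4 : ℝ) (hPi4 : 0 < Pi4) (h34 : Pi3 = Pi4) (h14 : Pi1 = 2 / Pi4) :
    idftMatrix n (fun k => Khat0 n Pi1 Pi3 k) = ((Pi3 : ℝ) : ℂ) • (1 : Matrix (Fin n) (Fin n) ℂ) ∧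
    idftMatrix n (fun k => Real.sqrt (2 * Khat0 n Pi1 Pi3 k + Pi2 * Pi3 ^ 2)) =
      ((Real.sqrt (2 * Pi3 + Pi2 * Pi3 ^ 2) : ℝ) : ℂ) • (1 : Matrix (Fin n) (Fin n) ℂ) ∧
    idftMatrix n (fun k => Real.sqrt (2 * Lhat0 n Pi1 Pi4 k / Pi4)) =
      ((Real.sqrt (2 / Pi4) : ℝ) : ℂ) • (1 : Matrix (Fin n) (Fin n) ℂ) ∧
    idftMatrix n (fun k => Lhat0 n Pi1 Pi4 k) = (1 : Matrix (Fin n) (Fin n) ℂ) := by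
  subst h14 h34
  simp only [Khat0_two_div_self hPi4, Lhat0_two_div_self hPi4, mul_one]
  refine ⟨idftMatrix_const n _, idftMatrix_const n _, idftMatrix_const n _, ?_⟩
  simpa using idftMatrix_const n 1

/-- When `Π3 = Π4` and `Π1 = 2/Π4`, all four physical-space LQG gain blocks
`K₁, K₂, L₁, L₂` (inverse DFTs of the frequency-domain gains) are scalar
multiples of the identity, i.e. the optimal LQG controller is completely
decentralized. -/
theorem lqg_completely_decentralized (n : ℕ) (hn : 1 ≤ n)
    (Pi1 Pi2 Pi3 Pi4 : ℝ) (hPi1 : 0 ≤ Pi1) (hPi2 : 0 < Pi2) (hPi3 : 0 < Pi3)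
    (hPi4 : 0 < Pi4) (h34 : Pi3 = Pi4) (h14 : Pi1 = 2 / Pi4) :
    idftMatrix n (fun k => Khat0 n Pi1 Pi3 k) = ((Pi3 : ℝ) : ℂ) • (1 : Matrix (Fin n) (Fin n) ℂ) ∧
    idftMatrix n (fun k => Real.sqrt (2 * Khat0 n Pi1 Pi3 k + Pi2 * Pi3 ^ 2)) =
      ((Real.sqrt (2 * Pi3 + Pi2 * Pi3 ^ 2) : ℝ) : ℂ) • (1 : Matrix (Fin n) (Fin n) ℂ) ∧
    idftMatrix n (fun k => Real.sqrt (2 * Lhat0 n Pi1 Pi4 k / Pi4)) =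
      ((Real.sqrt (2 / Pi4) : ℝ) : ℂ) • (1 : Matrix (Fin n) (Fin n) ℂ) ∧
    idftMatrix n (fun k => Lhat0 n Pi1 Pi4 k) = (1 : Matrix (Fin n) (Fin n) ℂ) :=
  lqg_completely_decentralized_general n Pi1 Pi2 Pi3 Pi4 hPi4 h34 h14
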